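/- arXiv:1602.03659 — 2 statements merged into one kernel-verified Lean document; each statement's English description precedes it below -/
import Mathlib

section
/- For any symmetric polynomial f in variables x₀,…,x_k over ℚ, the coefficient of x₀ⁿ x₁ⁿ ⋯ x_kⁿ in f·∏_{i≠j}(x_i − x_j) equals (k+1)! times the coefficient of x₀ⁿ x₁^{n−1} ⋯ x_k^{n−k} in f·∏_{i<j}(x_i − x_j). -/
open MvPolynomial Finset

variable {m : ℕ}

/-- Convert a product over the strict lower-triangular pairs to an iterated product. -/
lemma aux_prod_filter_lt {M : Type*} [CommMonoid M] (f : Fin m → Fin m → M) :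
    ∏ p ∈ Finset.univ.filter (fun p : Fin m × Fin m => p.1 < p.2), f p.1 p.2 =
      ∏ i : Fin m, ∏ j ∈ Finset.Ioi i, f i j := by
  rw [Finset.prod_sigma']
  refine (Finset.prod_nbij' (fun p : Fin m × Fin m => (⟨p.1, p.2⟩ : Σ _ : Fin m, Fin m))
    (fun p => (p.1, p.2)) ?_ ?_ ?_ ?_ ?_).symm.symm
  · intro a ha
    simp only [Finset.mem_filter, Finset.mem_univ, true_and] at ha
    simp [Finset.mem_sigma, Finset.mem_Ioi, ha]
  · intro a ha
    simp only [Finset.mem_sigma, Finset.mem_univ, Finset.mem_Ioi, true_and] at ha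
    simp [ha]
  · intro a _; rfl
  · intro a _; rfl
  · intro a _; rfl

lemma aux_prod_filter_gt {M : Type*} [CommMonoid M] (f : Fin m × Fin m → M) :
    ∏ p ∈ Finset.univ.filter (fun p : Fin m × Fin m => p.2 < p.1), f p =
      ∏ p ∈ Finset.univ.filter (fun p : Fin m × Fin m => p.1 < p.2), f p.swap := by
  refine Finset.prod_nbij' Prod.swap Prod.swap ?_ ?_ ?_ ?_ ?_ <;>
    simp [Prod.swap, Finset.mem_filter]

lemma aux_filter_ne :
    (Finset.univ.filter (fun p : Fin m × Fin m => p.1 ≠ p.2)) =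
      (Finset.univ.filter (fun p : Fin m × Fin m => p.1 < p.2)) ∪
      (Finset.univ.filter (fun p : Fin m × Fin m => p.2 < p.1)) := by
  ext p
  simp only [Finset.mem_filter, Finset.mem_union, Finset.mem_univ, true_and]
  constructor
  · exact fun h => h.lt_or_gt
  · rintro (h | h) <;> [exact h.ne; exact h.ne']

lemma aux_prod_X_pow {ι : Type*} (s : Finset ι) (a : ι → Fin m) (e : ι → ℕ) :
    ∏ i ∈ s, (X (a i) : MvPolynomial (Fin m) ℚ) ^ e i =
      monomial (∑ i ∈ s, Finsupp.single (a i) (e i)) 1 := by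
  induction s using Finset.cons_induction with
  | empty => simp
  | cons i s hi ih =>
      rw [Finset.prod_cons, Finset.sum_cons, ih, X_pow_eq_monomial, monomial_mul, one_mul]

lemma aux_sum_single_apply (σ : Equiv.Perm (Fin m)) (e : Fin m → ℕ) (j : Fin m) :
    (∑ i : Fin m, Finsupp.single (σ i) (e i)) j = e (σ.symm j) := by
  rw [Finsupp.finset_sum_apply]
  rw [Finset.sum_eq_single (σ.symm j)]
  · simp
  · intro b _ hb
    rw [Finsupp.single_apply, if_neg]
    intro h
    exact hb (by simpa using congrArg σ.symm h)
  · simp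

/-- The Vandermonde-type product, as a determinant. -/
lemma aux_vprod_eq_det :
    (∏ p ∈ Finset.univ.filter (fun p : Fin m × Fin m => p.1 < p.2),
        ((X p.2 : MvPolynomial (Fin m) ℚ) - X p.1)) =
      (Matrix.vandermonde (fun i : Fin m => (X i : MvPolynomial (Fin m) ℚ))).det := by
  rw [Matrix.det_vandermonde, aux_prod_filter_lt (fun i j => (X j : MvPolynomial (Fin m) ℚ) - X i)]

lemma aux_rename_det (σ : Equiv.Perm (Fin m)) :
    rename σ (Matrix.vandermonde (fun i : Fin m => (X i : MvPolynomial (Fin m) ℚ))).det =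
      ((Equiv.Perm.sign σ : ℤ) : MvPolynomial (Fin m) ℚ) *
        (Matrix.vandermonde (fun i : Fin m => (X i : MvPolynomial (Fin m) ℚ))).det := by
  set V := Matrix.vandermonde (fun i : Fin m => (X i : MvPolynomial (Fin m) ℚ)) with hV
  have h1 := RingHom.map_det
    (rename (σ : Fin m → Fin m) : MvPolynomial (Fin m) ℚ →ₐ[ℚ] _).toRingHom V
  have h2 : V.map (rename (σ : Fin m → Fin m) : MvPolynomial (Fin m) ℚ →ₐ[ℚ] _).toRingHom
      = V.submatrix σ id := by
    ext i j
    simp [hV, Matrix.vandermonde, Matrix.map, Matrix.submatrix]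
  have h3 := Matrix.det_permute σ V
  have : rename (σ : Fin m → Fin m) V.det = (V.map
      (rename (σ : Fin m → Fin m) : MvPolynomial (Fin m) ℚ →ₐ[ℚ] _).toRingHom).det := h1
  rw [this, h2, h3]

lemma aux_apply (a : Fin m → Fin m) (ha : Function.Injective a) (e : Fin m → ℕ) (i₀ : Fin m) :
    (∑ i : Fin m, Finsupp.single (a i) (e i)) (a i₀) = e i₀ := by
  rw [Finsupp.finset_sum_apply, Finset.sum_eq_single i₀]
  · simp
  · intro b _ hb
    rw [Finsupp.single_apply, if_neg (fun h => hb (ha h))]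
  · simp

/-- For a symmetric polynomial `f` in `x₀, …, x_k` over `ℚ`, the coefficient of
`x₀ⁿ x₁ⁿ ⋯ x_kⁿ` in `f · ∏_{i ≠ j} (x_i − x_j)` equals `(k+1)!` times the coefficient
of `x₀ⁿ x₁^{n−1} ⋯ x_k^{n−k}` in `f · ∏_{i < j} (x_i − x_j)`. -/
theorem coeff_discriminant_eq_factorial_mul_coeff_vandermonde
    (k n : ℕ) (hn : k ≤ n) (f : MvPolynomial (Fin (k + 1)) ℚ) (hf : f.IsSymmetric) :
    MvPolynomial.coeff (∑ i : Fin (k + 1), Finsupp.single i n)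
        (f * ∏ p ∈ Finset.univ.filter (fun p : Fin (k + 1) × Fin (k + 1) => p.1 ≠ p.2),
          (X p.1 - X p.2)) =
      (Nat.factorial (k + 1) : ℚ) *
        MvPolynomial.coeff (∑ i : Fin (k + 1), Finsupp.single i (n - (i : ℕ)))
          (f * ∏ p ∈ Finset.univ.filter (fun p : Fin (k + 1) × Fin (k + 1) => p.1 < p.2),
            (X p.1 - X p.2)) := by
  set V : MvPolynomial (Fin (k+1)) ℚ :=
    ∏ p ∈ Finset.univ.filter (fun p : Fin (k+1) × Fin (k+1) => p.1 < p.2), (X p.2 - X p.1) with hVdef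
  set N := (Finset.univ.filter (fun p : Fin (k+1) × Fin (k+1) => p.1 < p.2)).card with hN
  set U : Fin (k+1) →₀ ℕ := ∑ i : Fin (k+1), Finsupp.single i n with hU
  set S : Fin (k+1) →₀ ℕ := ∑ i : Fin (k+1), Finsupp.single i (n - (i : ℕ)) with hS
  set g : MvPolynomial (Fin (k+1)) ℚ := f * V with hg
  -- the `lt` product in the statement equals `(-1)^N * V`
  have hlt : (∏ p ∈ Finset.univ.filter (fun p : Fin (k+1) × Fin (k+1) => p.1 < p.2),
      ((X p.1 : MvPolynomial (Fin (k+1)) ℚ) - X p.2)) = (-1 : MvPolynomial (Fin (k+1)) ℚ) ^ N * V := by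
    rw [hVdef, hN, ← Finset.prod_const, ← Finset.prod_mul_distrib]
    exact Finset.prod_congr rfl (fun p _ => by ring)
  -- the `ne` product equals `(-1)^N * (V * V)`
  have hgt : (∏ p ∈ Finset.univ.filter (fun p : Fin (k+1) × Fin (k+1) => p.2 < p.1),
      ((X p.1 : MvPolynomial (Fin (k+1)) ℚ) - X p.2)) = V := by
    rw [aux_prod_filter_gt (fun p : Fin (k+1) × Fin (k+1) => (X p.1 : MvPolynomial (Fin (k+1)) ℚ) - X p.2)]
    rfl
  have hdisj : Disjoint (Finset.univ.filter (fun p : Fin (k+1) × Fin (k+1) => p.1 < p.2))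
      (Finset.univ.filter (fun p : Fin (k+1) × Fin (k+1) => p.2 < p.1)) := by
    rw [Finset.disjoint_left]
    intro p hp hp'
    simp only [Finset.mem_filter] at hp hp'
    exact absurd hp'.2 (asymm hp.2)
  have hne : (∏ p ∈ Finset.univ.filter (fun p : Fin (k+1) × Fin (k+1) => p.1 ≠ p.2),
      ((X p.1 : MvPolynomial (Fin (k+1)) ℚ) - X p.2)) =
      (-1 : MvPolynomial (Fin (k+1)) ℚ) ^ N * (V * V) := by
    rw [aux_filter_ne, Finset.prod_union hdisj, hlt, hgt, mul_assoc]
  -- alternating property of g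
  have hrg : ∀ σ : Equiv.Perm (Fin (k+1)), rename σ g = C (((Equiv.Perm.sign σ : ℤ) : ℚ)) * g := by
    intro σ
    rw [hg, map_mul, hf σ, hVdef, aux_vprod_eq_det, aux_rename_det σ]
    rw [show (((Equiv.Perm.sign σ : ℤ)) : MvPolynomial (Fin (k+1)) ℚ)
        = C (((Equiv.Perm.sign σ : ℤ) : ℚ)) from (map_intCast (C : ℚ →+* _) _).symm]
    rw [← aux_vprod_eq_det]
    ring
  have hsq : ∀ σ : Equiv.Perm (Fin (k+1)),
      ((Equiv.Perm.sign σ : ℤ) : ℚ) * ((Equiv.Perm.sign σ : ℤ) : ℚ) = 1 := by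
    intro σ
    rcases Int.units_eq_one_or (Equiv.Perm.sign σ) with h | h <;> rw [h] <;> norm_num
  have halt : ∀ (σ : Equiv.Perm (Fin (k+1))) (d : Fin (k+1) →₀ ℕ),
      coeff (Finsupp.mapDomain σ d) g = ((Equiv.Perm.sign σ : ℤ) : ℚ) * coeff d g := by
    intro σ d
    have h1 : coeff (Finsupp.mapDomain σ d) (rename σ g) = coeff d g :=
      coeff_rename_mapDomain σ σ.injective g d
    rw [hrg σ, coeff_C_mul] at h1
    calc coeff (Finsupp.mapDomain σ d) g
        = (((Equiv.Perm.sign σ : ℤ) : ℚ) * ((Equiv.Perm.sign σ : ℤ) : ℚ)) *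
            coeff (Finsupp.mapDomain σ d) g := by rw [hsq σ, one_mul]
      _ = ((Equiv.Perm.sign σ : ℤ) : ℚ) * coeff d g := by rw [mul_assoc, h1]
  -- key computation
  have hUj : ∀ j : Fin (k+1), U j = n := by
    intro j
    exact aux_apply id Function.injective_id (fun _ => n) j
  have hSj : ∀ j : Fin (k+1), S j = n - (j : ℕ) := by
    intro j
    exact aux_apply id Function.injective_id (fun i : Fin (k+1) => n - (i : ℕ)) j
  have key : coeff U (g * V) = (Nat.factorial (k+1) : ℚ) * coeff S g := by
    rw [hVdef, aux_vprod_eq_det, Matrix.det_apply', Finset.mul_sum, coeff_sum]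
    have hterm : ∀ σ : Equiv.Perm (Fin (k+1)),
        coeff U (g * (((Equiv.Perm.sign σ : ℤ) : MvPolynomial (Fin (k+1)) ℚ) *
          ∏ i : Fin (k+1),
            Matrix.vandermonde (fun i : Fin (k+1) => (X i : MvPolynomial (Fin (k+1)) ℚ)) (σ i) i))
          = coeff S g := by
      intro σ
      set d : Fin (k+1) →₀ ℕ := ∑ i : Fin (k+1), Finsupp.single (σ i) ((i : ℕ)) with hd
      have hdj : ∀ j : Fin (k+1), d j = ((σ.symm j : Fin (k+1)) : ℕ) := by
        intro j
        have h := aux_apply (σ : Fin (k+1) → Fin (k+1)) σ.injective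
          (fun i : Fin (k+1) => (i : ℕ)) (σ.symm j)
        rw [Equiv.apply_symm_apply] at h
        exact h
      have hdU : d ≤ U := by
        intro j
        rw [hdj j, hUj j]
        exact le_trans (Nat.le_of_lt_succ (σ.symm j).isLt) hn
      have hmap : U - d = Finsupp.mapDomain (σ : Fin (k+1) → Fin (k+1)) S := by
        ext j
        have h1 : Finsupp.mapDomain (σ : Fin (k+1) → Fin (k+1)) S (σ (σ.symm j)) = S (σ.symm j) :=
          Finsupp.mapDomain_apply σ.injective S _
        rw [Equiv.apply_symm_apply] at h1
        rw [Finsupp.tsub_apply, hUj j, hdj j, h1, hSj]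
      have hmono : (∏ i : Fin (k+1),
          Matrix.vandermonde (fun i : Fin (k+1) => (X i : MvPolynomial (Fin (k+1)) ℚ)) (σ i) i)
          = monomial d 1 := by
        rw [hd, ← aux_prod_X_pow Finset.univ (σ : Fin (k+1) → Fin (k+1))
          (fun i : Fin (k+1) => (i : ℕ))]
        exact Finset.prod_congr rfl (fun i _ => by rw [Matrix.vandermonde_apply])
      rw [hmono]
      rw [show (((Equiv.Perm.sign σ : ℤ)) : MvPolynomial (Fin (k+1)) ℚ)
          = C (((Equiv.Perm.sign σ : ℤ) : ℚ)) from (map_intCast (C : ℚ →+* _) _).symm]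
      rw [show g * (C (((Equiv.Perm.sign σ : ℤ) : ℚ)) * monomial d 1)
          = C (((Equiv.Perm.sign σ : ℤ) : ℚ)) * (g * monomial d 1) by ring]
      rw [coeff_C_mul, coeff_mul_monomial', if_pos hdU, mul_one, hmap, halt σ S,
        ← mul_assoc, hsq σ, one_mul]
    rw [Finset.sum_congr rfl (fun σ _ => hterm σ), Finset.sum_const, Finset.card_univ,
      Fintype.card_perm, Fintype.card_fin, nsmul_eq_mul]
  rw [hne, hlt]
  have hC : ((-1 : MvPolynomial (Fin (k+1)) ℚ)) ^ N = C ((-1 : ℚ) ^ N) := by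
    rw [map_pow, map_neg, map_one]
  have e1 : f * ((-1 : MvPolynomial (Fin (k+1)) ℚ) ^ N * (V * V))
      = C ((-1 : ℚ) ^ N) * (g * V) := by rw [hg, hC]; ring
  have e2 : f * ((-1 : MvPolynomial (Fin (k+1)) ℚ) ^ N * V)
      = C ((-1 : ℚ) ^ N) * g := by rw [hg, hC]; ring
  rw [e1, e2, coeff_C_mul, coeff_C_mul, key]
  ring
end

section
/- For k = 1 and any polynomial f ∈ ℚ[x₀, x₁] that is symmetric (f(x₀,x₁) = f(x₁,x₀)), the coefficient of x₀ⁿx₁ⁿ in f·(x₀−x₁)(x₁−x₀) equals 2 times the coefficient of x₀ⁿx₁^{n−1} in f·(x₀−x₁). -/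
open MvPolynomial

lemma sub_single_one (a b : ℕ) :
    (Finsupp.single (0 : Fin 2) a + Finsupp.single (1 : Fin 2) b) - Finsupp.single (1 : Fin 2) 1
      = Finsupp.single (0 : Fin 2) a + Finsupp.single (1 : Fin 2) (b - 1) := by
  ext i
  fin_cases i <;> simp [Finsupp.single_apply]

lemma sub_single_zero (a b : ℕ) :
    (Finsupp.single (0 : Fin 2) a + Finsupp.single (1 : Fin 2) b) - Finsupp.single (0 : Fin 2) 1
      = Finsupp.single (0 : Fin 2) (a - 1) + Finsupp.single (1 : Fin 2) b := by
  ext i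
  fin_cases i <;> simp [Finsupp.single_apply]

/-- The `k = 1` case relating the discriminant `(x₀−x₁)(x₁−x₀)` and the Vandermonde
determinant `x₀−x₁`: for symmetric `f`, the coefficient of `x₀ⁿx₁ⁿ` in
`f·(x₀−x₁)(x₁−x₀)` is twice the coefficient of `x₀ⁿx₁^{n−1}` in `f·(x₀−x₁)`. -/
theorem coeff_disc_eq_two_mul_coeff_vandermonde
    (n : ℕ) (hn : 1 ≤ n) (f : MvPolynomial (Fin 2) ℚ)
    (hf : MvPolynomial.rename (⇑(Equiv.swap (0 : Fin 2) 1)) f = f) :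
    MvPolynomial.coeff (Finsupp.single (0 : Fin 2) n + Finsupp.single (1 : Fin 2) n)
        (f * ((X (0 : Fin 2) - X 1) * (X 1 - X 0))) =
      2 * MvPolynomial.coeff
        (Finsupp.single (0 : Fin 2) n + Finsupp.single (1 : Fin 2) (n - 1))
        (f * (X (0 : Fin 2) - X 1)) := by
  set g : MvPolynomial (Fin 2) ℚ := f * (X 0 - X 1) with hgdef
  have hswap0 : Equiv.swap (0 : Fin 2) 1 0 = 1 := Equiv.swap_apply_left 0 1
  have hswap1 : Equiv.swap (0 : Fin 2) 1 1 = 0 := Equiv.swap_apply_right 0 1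
  have hg : rename (⇑(Equiv.swap (0 : Fin 2) 1)) g = -g := by
    rw [hgdef, map_mul, map_sub, rename_X, rename_X, hswap0, hswap1, hf]
    ring
  have hanti : MvPolynomial.coeff
      (Finsupp.single (0 : Fin 2) (n - 1) + Finsupp.single (1 : Fin 2) n) g
      = - MvPolynomial.coeff
      (Finsupp.single (0 : Fin 2) n + Finsupp.single (1 : Fin 2) (n - 1)) g := by
    have := MvPolynomial.coeff_rename_mapDomain (⇑(Equiv.swap (0 : Fin 2) 1))
      (Equiv.injective _) g
      (Finsupp.single (0 : Fin 2) n + Finsupp.single (1 : Fin 2) (n - 1))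
    rw [hg, Finsupp.mapDomain_add, Finsupp.mapDomain_single, Finsupp.mapDomain_single,
      hswap0, hswap1, MvPolynomial.coeff_neg] at this
    rw [add_comm] at this
    linarith [this]
  have h0mem : (0 : Fin 2) ∈ (Finsupp.single (0 : Fin 2) n + Finsupp.single (1 : Fin 2) n).support := by
    simp [Finsupp.mem_support_iff, Finsupp.single_apply]
    omega
  have h1mem : (1 : Fin 2) ∈ (Finsupp.single (0 : Fin 2) n + Finsupp.single (1 : Fin 2) n).support := by
    simp [Finsupp.mem_support_iff, Finsupp.single_apply]
    omega
  have key : f * ((X (0 : Fin 2) - X 1) * (X 1 - X 0)) = g * X 1 - g * X 0 := by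
    rw [hgdef]; ring
  rw [key, MvPolynomial.coeff_sub, MvPolynomial.coeff_mul_X', MvPolynomial.coeff_mul_X',
    if_pos h0mem, if_pos h1mem, sub_single_one, sub_single_zero, hanti]
  ring
end
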